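/- arXiv:math/0406386 — 6 statements merged into one kernel-verified Lean document; each statement's English description precedes it below -/
import Mathlib

section
/- For any nonnegative real numbers a, b, c: [4abc(2abc+(a+b+c)(ab+ac+bc)) − (a²+b²+c²)D₃(a,b,c)]² ≥ (a+b+c)²(a²b+ab²+a²c+ac²+b²c+bc²)²·D₃(a,b,c), where D₃(a,b,c) = (a+b+c)(a+b−c)(a−b+c)(−a+b+c). -/
set_option maxHeartbeats 1600000

theorem lemma1_easy (a b c : ℝ) (ha : 0 ≤ a) (hb : 0 ≤ b) (hc : 0 ≤ c)
    (hD : (a+b+c)*(a+b-c)*(a-b+c)*(-a+b+c) ≤ 0) :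
    (4*a*b*c*(2*a*b*c + (a+b+c)*(a*b+a*c+b*c))
      - (a^2+b^2+c^2) * ((a+b+c)*(a+b-c)*(a-b+c)*(-a+b+c)))^2
    ≥ (a+b+c)^2 * (a^2*b+a*b^2+a^2*c+a*c^2+b^2*c+b*c^2)^2
        * ((a+b+c)*(a+b-c)*(a-b+c)*(-a+b+c)) := by
  have h2 : 0 ≤ (a+b+c)^2 * (a^2*b+a*b^2+a^2*c+a*c^2+b^2*c+b*c^2)^2 := by positivity
  have h3 : (a+b+c)^2 * (a^2*b+a*b^2+a^2*c+a*c^2+b^2*c+b*c^2)^2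
        * ((a+b+c)*(a+b-c)*(a-b+c)*(-a+b+c)) ≤ 0 :=
    mul_nonpos_of_nonneg_of_nonpos h2 hD
  have h4 := sq_nonneg (4*a*b*c*(2*a*b*c + (a+b+c)*(a*b+a*c+b*c))
      - (a^2+b^2+c^2) * ((a+b+c)*(a+b-c)*(a-b+c)*(-a+b+c)))
  linarith

theorem lemma1_key (x y z : ℝ) (hx : 0 ≤ x) (hy : 0 ≤ y) (hz : 0 ≤ z) :
    (4*(y+z)*(z+x)*(x+y)*(2*(y+z)*(z+x)*(x+y) + ((y+z)+(z+x)+(x+y))*((y+z)*(z+x)+(y+z)*(x+y)+(z+x)*(x+y)))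
      - ((y+z)^2+(z+x)^2+(x+y)^2) * (((y+z)+(z+x)+(x+y))*((y+z)+(z+x)-(x+y))*((y+z)-(z+x)+(x+y))*(-(y+z)+(z+x)+(x+y))))^2
    ≥ ((y+z)+(z+x)+(x+y))^2 * ((y+z)^2*(z+x)+(y+z)*(z+x)^2+(y+z)^2*(x+y)+(y+z)*(x+y)^2+(z+x)^2*(x+y)+(z+x)*(x+y)^2)^2
        * (((y+z)+(z+x)+(x+y))*((y+z)+(z+x)-(x+y))*((y+z)-(z+x)+(x+y))*(-(y+z)+(z+x)+(x+y))) := by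
  obtain ⟨u, rfl⟩ : ∃ t : ℝ, x = t^2 := ⟨Real.sqrt x, (Real.sq_sqrt hx).symm⟩
  obtain ⟨v, rfl⟩ : ∃ t : ℝ, y = t^2 := ⟨Real.sqrt y, (Real.sq_sqrt hy).symm⟩
  obtain ⟨w, rfl⟩ : ∃ t : ℝ, z = t^2 := ⟨Real.sqrt z, (Real.sq_sqrt hz).symm⟩
  have hR0 : (0:ℝ) ≤ 512*v^6*w^18 + 3264*v^8*w^16 + 8448*v^10*w^14 + 11136*v^12*w^12 + 8448*v^14*w^10 + 3264*v^16*w^8 + 512*v^18*w^6 + 3008*u^2*v^6*w^16 + 16064*u^2*v^8*w^14 + 32512*u^2*v^10*w^12 + 32512*u^2*v^12*w^10 + 16064*u^2*v^14*w^8 + 3008*u^2*v^16*w^6 + 6976*u^4*v^6*w^14 + 30592*u^4*v^8*w^12 + 46592*u^4*v^10*w^10 + 30592*u^4*v^12*w^8 + 6976*u^4*v^14*w^6 + 512*u^6*w^18 + 3008*u^6*v^2*w^16 + 6976*u^6*v^4*w^14 + 16128*u^6*v^6*w^12 + 30208*u^6*v^8*w^10 + 30208*u^6*v^10*w^8 +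 16128*u^6*v^12*w^6 + 6976*u^6*v^14*w^4 + 3008*u^6*v^16*w^2 + 512*u^6*v^18 + 3264*u^8*w^16 + 16064*u^8*v^2*w^14 + 30592*u^8*v^4*w^12 + 30208*u^8*v^6*w^10 + 25216*u^8*v^8*w^8 + 30208*u^8*v^10*w^6 + 30592*u^8*v^12*w^4 + 16064*u^8*v^14*w^2 + 3264*u^8*v^16 + 8448*u^10*w^14 + 32512*u^10*v^2*w^12 + 46592*u^10*v^4*w^10 + 30208*u^10*v^6*w^8 + 30208*u^10*v^8*w^6 + 46592*u^10*v^10*w^4 + 32512*u^10*v^12*w^2 + 8448*u^10*v^14 + 11136*u^12*w^12 + 32512*u^12*v^2*w^10 + 30592*u^12*v^4*w^8 + 16128*u^12*v^6*w^6 + 30592*u^12*v^8*w^4 + 32512*u^12*v^10*w^2 + 11136*u^12*v^12 + 8448*u^14*w^10 + 16064*u^14*v^2*w^8 + 6976*u^14*v^4*w^6 + 6976*u^14*v^6*w^4 + 16064*u^14*v^8*w^2 + 8448*u^14*v^10 + 3264*u^16*w^8 + 3008*u^16*v^2*w^6 + 3008*u^16*v^6*w^2 + 3264*u^16*v^8 +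 512*u^18*w^6 + 512*u^18*v^6 := by positivity
  have t1 : (0:ℝ) ≤ 64*(w^2)^10*(u^2-v^2)^2 := by positivity
  have t2 : (0:ℝ) ≤ 256*(w^2)^9*(u^2+v^2)*(u^2-v^2)^2 := by positivity
  have t3 : (0:ℝ) ≤ 320*(w^2)^8*(u^4-v^4)^2 := by positivity
  have t4 : (0:ℝ) ≤ 64*(u^2)^10*(v^2-w^2)^2 := by positivity
  have t5 : (0:ℝ) ≤ 256*(u^2)^9*(v^2+w^2)*(v^2-w^2)^2 := by positivity
  have t6 : (0:ℝ) ≤ 320*(u^2)^8*(v^4-w^4)^2 := by positivity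
  have t7 : (0:ℝ) ≤ 64*(v^2)^10*(u^2-w^2)^2 := by positivity
  have t8 : (0:ℝ) ≤ 256*(v^2)^9*(u^2+w^2)*(u^2-w^2)^2 := by positivity
  have t9 : (0:ℝ) ≤ 320*(v^2)^8*(u^4-w^4)^2 := by positivity
  linarith [hR0, t1, t2, t3, t4, t5, t6, t7, t8, t9]

theorem lemma1_inequality (a b c : ℝ) (ha : 0 ≤ a) (hb : 0 ≤ b) (hc : 0 ≤ c) :
    (4*a*b*c*(2*a*b*c + (a+b+c)*(a*b+a*c+b*c))
      - (a^2+b^2+c^2) * ((a+b+c)*(a+b-c)*(a-b+c)*(-a+b+c)))^2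
    ≥ (a+b+c)^2 * (a^2*b+a*b^2+a^2*c+a*c^2+b^2*c+b*c^2)^2
        * ((a+b+c)*(a+b-c)*(a-b+c)*(-a+b+c)) := by
  rcases le_total (a+b-c) 0 with h1|h1
  · apply lemma1_easy a b c ha hb hc
    have hv : 0 ≤ a-b+c := by linarith
    have hw : 0 ≤ -a+b+c := by linarith
    have hpu : (a+b+c)*(a+b-c) ≤ 0 := mul_nonpos_of_nonneg_of_nonpos (by linarith) h1
    have hvw : 0 ≤ (a-b+c)*(-a+b+c) := mul_nonneg hv hw
    nlinarith [hpu, hvw]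
  · rcases le_total (a-b+c) 0 with h2|h2
    · apply lemma1_easy a b c ha hb hc
      have hu : 0 ≤ a+b-c := h1
      have hw : 0 ≤ -a+b+c := by linarith
      have hpv : (a+b+c)*(a-b+c) ≤ 0 := mul_nonpos_of_nonneg_of_nonpos (by linarith) h2
      have huw : 0 ≤ (a+b-c)*(-a+b+c) := mul_nonneg hu hw
      nlinarith [hpv, huw]
    · rcases le_total (-a+b+c) 0 with h3|h3
      · apply lemma1_easy a b c ha hb hc
        have hpw : (a+b+c)*(-a+b+c) ≤ 0 := mul_nonpos_of_nonneg_of_nonpos (by linarith) h3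
        have huv : 0 ≤ (a+b-c)*(a-b+c) := mul_nonneg h1 h2
        nlinarith [hpw, huv]
      · have key := lemma1_key ((-a+b+c)/2) ((a-b+c)/2) ((a+b-c)/2)
          (by linarith) (by linarith) (by linarith)
        have e1 : (a-b+c)/2 + (a+b-c)/2 = a := by ring
        have e2 : (a+b-c)/2 + (-a+b+c)/2 = b := by ring
        have e3 : (-a+b+c)/2 + (a-b+c)/2 = c := by ring
        rw [e1, e2, e3] at key
        exact key
end

section
/- For any nonnegative real numbers a, b, c with a ≥ b ≥ c, the quantity 4abc(2abc+(a+b+c)(ab+ac+bc)) − (a²+b²+c²)(a+b+c)(a+b−c)(a−b+c)(−a+b+c) is nonnegative. -/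
theorem bracket_nonneg (a b c : ℝ) (hab : a ≥ b) (hbc : b ≥ c) (hc : 0 ≤ c) :
    0 ≤ 4*a*b*c*(2*a*b*c + (a+b+c)*(a*b+a*c+b*c))
      - (a^2+b^2+c^2) * ((a+b+c)*(a+b-c)*(a-b+c)*(-a+b+c)) := by
  obtain ⟨x, hx, rfl⟩ : ∃ x, 0 ≤ x ∧ a = b + x := ⟨a - b, by linarith, by ring⟩
  obtain ⟨y, hy, rfl⟩ : ∃ y, 0 ≤ y ∧ b = c + y := ⟨b - c, by linarith, by ring⟩
  calc (0:ℝ) ≤ 35*c^6 + 140*y*c^5 + 222*y^2*c^4 + 168*y^3*c^3 + 60*y^4*c^2 + 8*y^5*c + 70*x*c^5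
        + 222*x*y*c^4 + 252*x*y^2*c^3 + 120*x*y^3*c^2 + 20*x*y^4*c + 47*x^2*c^4 + 124*x^2*y*c^3
        + 116*x^2*y^2*c^2 + 48*x^2*y^3*c + 8*x^2*y^4 + 20*x^3*c^3 + 56*x^3*y*c^2 + 52*x^3*y^2*c
        + 16*x^3*y^3 + 13*x^4*c^2 + 28*x^4*y*c + 14*x^4*y^2 + 6*x^5*c + 6*x^5*y + x^6 := by positivity
    _ = 4*(c+y+x)*(c+y)*c*(2*(c+y+x)*(c+y)*c + ((c+y+x)+(c+y)+c)*((c+y+x)*(c+y)+(c+y+x)*c+(c+y)*c))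
      - ((c+y+x)^2+(c+y)^2+c^2) * (((c+y+x)+(c+y)+c)*((c+y+x)+(c+y)-c)*((c+y+x)-(c+y)+c)*(-(c+y+x)+(c+y)+c)) := by ring
end

section
/- For any nonnegative reals t₁, t₂, t₃, t₄: (t₁t₂+t₁t₃+t₁t₄+t₂t₃+t₂t₄+t₃t₄)² ≤ ∏_{{i<j<k}⊂{1,2,3,4}} (tᵢ+tⱼ+tₖ). -/
lemma aux (p q u v : ℝ) (hp : 0 ≤ p) (hq : 0 ≤ q) (hu : 0 ≤ u) (hv : 0 ≤ v)
    (h1 : 4*u ≤ p^2) (h2 : 4*v ≤ q^2) :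
    (u + v + p*q)^2 ≤ (p^2 + p*q + v) * (q^2 + p*q + u) := by
  nlinarith [sq_nonneg (u-v), mul_nonneg hp hq, mul_nonneg hu hv,
    mul_nonneg (mul_nonneg hp hq) hu, mul_nonneg (mul_nonneg hp hq) hv,
    mul_nonneg (mul_nonneg hp hq) (mul_nonneg hp hq),
    mul_nonneg hu (sub_nonneg.2 h1), mul_nonneg hv (sub_nonneg.2 h2)]

theorem e2_sq_le_prod_face_sums (t₁ t₂ t₃ t₄ : ℝ)
    (h₁ : 0 ≤ t₁) (h₂ : 0 ≤ t₂) (h₃ : 0 ≤ t₃) (h₄ : 0 ≤ t₄) :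
    (t₁*t₂+t₁*t₃+t₁*t₄+t₂*t₃+t₂*t₄+t₃*t₄)^2
    ≤ (t₁+t₂+t₃) * (t₁+t₂+t₄) * (t₁+t₃+t₄) * (t₂+t₃+t₄) := by
  have := aux (t₁+t₂) (t₃+t₄) (t₁*t₂) (t₃*t₄) (by linarith) (by linarith)
    (mul_nonneg h₁ h₂) (mul_nonneg h₃ h₄) (by nlinarith [sq_nonneg (t₁-t₂)])
    (by nlinarith [sq_nonneg (t₃-t₄)])
  nlinarith [this]
end

section
/- For real numbers λ₁, λ₂, ..., λₙ with 0 ≤ λ₁ ≤ λ₂ ≤ ... ≤ λₙ: 1 + λₙe₁ + λₙλₙ₋₁e₂ + ... + λₙλₙ₋₁···λ₁eₙ ≥ ∏ᵢ₌₁ⁿ (1 + λᵢ²), where eₖ = eₖ(λ₁,...,λₙ) is the k-th elementary symmetric polynomial. -/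
/-!
Expanding the left-hand side gives `∏ (1 + λᵢ²) = ∑ₖ ∑_{|S| = k} (∏_{i ∈ S} λᵢ)²`. For `|S| = k`, one
factor `∏_{i ∈ S} λᵢ` is at most the product of the `k` largest values `λₙ ⋯ λₙ₋ₖ₊₁`, by exchanging
elements of `S` below the top `k` indices for missing ones above; the other factor sums to `eₖ`.
-/

open Finset

theorem Finset.prod_le_prod_of_card_eq_of_sdiff_le {ι R : Type*} [DecidableEq ι]
    [CommSemiring R] [LinearOrder R] [IsOrderedRing R]
    {f : ι → R} {s t : Finset ι} (hf : ∀ i ∈ s, 0 ≤ f i) (hst : #s = #t)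
    (hle : ∀ i ∈ s \ t, ∀ j ∈ t \ s, f i ≤ f j) :
    ∏ i ∈ s, f i ≤ ∏ i ∈ t, f i := by
  rcases (s \ t).eq_empty_or_nonempty with hempty | hne
  · rw [eq_of_subset_of_card_le (sdiff_eq_empty_iff_subset.mp hempty) hst.ge]
  set c := (s \ t).sup' hne f
  have hc : 0 ≤ c := (hf _ (mem_sdiff.mp hne.choose_spec).1).trans (le_sup' f hne.choose_spec)
  rw [← prod_inter_mul_prod_sdiff s t, ← prod_inter_mul_prod_sdiff t s, inter_comm t s]
  refine mul_le_mul_of_nonneg_left ?_ (prod_nonneg fun i hi => hf i (mem_inter.mp hi).1)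
  calc ∏ i ∈ s \ t, f i ≤ c ^ #(s \ t) := by
        rw [← prod_const]
        exact prod_le_prod (fun i hi => hf i (mem_sdiff.mp hi).1) fun i hi => le_sup' f hi
    _ = c ^ #(t \ s) := by rw [card_sdiff_comm hst]
    _ ≤ ∏ j ∈ t \ s, f j := by
        rw [← prod_const]
        exact prod_le_prod (fun _ _ => hc) fun j hj => sup'_le hne f fun i hi => hle i hi j hj

theorem Fin.card_filter_sub_le_val {n k : ℕ} (hk : k ≤ n) :
    #{i : Fin n | n - k ≤ (i : ℕ)} = k := by
  have := card_filter_add_card_filter_not (s := (univ : Finset (Fin n)))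
    (fun i : Fin n => (i : ℕ) < n - k)
  simp only [Fin.card_filter_val_lt, card_univ, Fintype.card_fin, not_lt] at this
  omega

theorem Monotone.prod_le_prod_top_of_card_eq {R : Type*} [CommSemiring R] [LinearOrder R]
    [IsOrderedRing R] {n k : ℕ} {f : Fin n → R} (hf : Monotone f) (hpos : ∀ i, 0 ≤ f i)
    {s : Finset (Fin n)} (hs : #s = k) :
    ∏ i ∈ s, f i ≤ ∏ i ∈ {i : Fin n | n - k ≤ (i : ℕ)}, f i := by
  have hkn : k ≤ n := hs ▸ card_le_univ s |>.trans_eq (Fintype.card_fin n)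
  refine prod_le_prod_of_card_eq_of_sdiff_le (fun i _ => hpos i)
    (hs.trans (Fin.card_filter_sub_le_val hkn).symm) fun i hi j hj => hf ?_
  simp only [mem_sdiff, mem_filter, mem_univ, true_and] at hi hj
  exact Fin.le_def.mpr (by omega)

theorem Finset.prod_one_add_sq_eq_sum_powersetCard {ι R : Type*} [Fintype ι] [CommSemiring R]
    (f : ι → R) :
    ∏ i, (1 + f i ^ 2) = ∑ k ∈ range (Fintype.card ι + 1),
      ∑ s ∈ powersetCard k univ, (∏ i ∈ s, f i) * ∏ i ∈ s, f i := by
  simp only [prod_one_add, sum_powerset, card_univ, ← prod_mul_distrib, sq]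

theorem djokovic_type_A_AS1_general (n : ℕ) (lam : Fin n → ℝ)
    (hpos : ∀ i, 0 ≤ lam i)
    (hmono : Monotone lam) :
    (∏ i : Fin n, (1 + lam i ^ 2)) ≤
      ∑ k ∈ Finset.range (n+1),
        (∏ i ∈ (Finset.univ.filter (fun i : Fin n => n - k ≤ (i : ℕ))), lam i) *
        (∑ s ∈ Finset.powersetCard k (Finset.univ : Finset (Fin n)), ∏ i ∈ s, lam i) := by
  rw [prod_one_add_sq_eq_sum_powersetCard, Fintype.card_fin]
  refine sum_le_sum fun k _ => ?_
  rw [mul_sum]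
  refine sum_le_sum fun s hs => mul_le_mul_of_nonneg_right ?_ (prod_nonneg fun i _ => hpos i)
  exact hmono.prod_le_prod_top_of_card_eq hpos (mem_powersetCard.mp hs).2

theorem djokovic_type_A_AS1 (n : ℕ) (hn : 1 ≤ n) (lam : Fin n → ℝ)
    (hpos : ∀ i, 0 ≤ lam i)
    (hmono : Monotone lam) :
    (∏ i : Fin n, (1 + lam i ^ 2)) ≤
      ∑ k ∈ Finset.range (n+1),
        (∏ i ∈ (Finset.univ.filter (fun i : Fin n => n - k ≤ (i : ℕ))), lam i) *
        (∑ s ∈ Finset.powersetCard k (Finset.univ : Finset (Fin n)), ∏ i ∈ s, lam i) :=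
  djokovic_type_A_AS1_general n lam hpos hmono
end

section
/- For real numbers X₁ ≥ X₂ ≥ X₃ ≥ 0 and ξ₁, ξ₂, ξ₃ ≥ 0: (Ψ)² ≥ Ψ₁₂·Ψ₁₃·Ψ₂₃, where Ψ = 1 + (ξ₁+ξ₂+ξ₃)X₁ + (ξ₁ξ₂+ξ₁ξ₃+ξ₂ξ₃)X₁X₂ + ξ₁ξ₂ξ₃X₁X₂X₃ and Ψᵢⱼ = 1 + (ξᵢ+ξⱼ)Xᵢ + ξᵢξⱼXᵢXⱼ. -/
set_option maxHeartbeats 2000000 in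

theorem psi_case_n3 (X₁ X₂ X₃ ξ₁ ξ₂ ξ₃ : ℝ)
    (h12 : X₁ ≥ X₂) (h23 : X₂ ≥ X₃) (h3 : X₃ ≥ 0)
    (hξ₁ : 0 ≤ ξ₁) (hξ₂ : 0 ≤ ξ₂) (hξ₃ : 0 ≤ ξ₃) :
    (1 + (ξ₁+ξ₂+ξ₃)*X₁ + (ξ₁*ξ₂+ξ₁*ξ₃+ξ₂*ξ₃)*X₁*X₂ + ξ₁*ξ₂*ξ₃*X₁*X₂*X₃)^2
    ≥ (1 + (ξ₁+ξ₂)*X₁ + ξ₁*ξ₂*X₁*X₂) * (1 + (ξ₁+ξ₃)*X₁ + ξ₁*ξ₃*X₁*X₃)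
      * (1 + (ξ₂+ξ₃)*X₂ + ξ₂*ξ₃*X₂*X₃) := by
  obtain ⟨b, hb, rfl⟩ : ∃ b, 0 ≤ b ∧ X₂ = X₃ + b := ⟨X₂ - X₃, by linarith, by ring⟩
  obtain ⟨a, ha, rfl⟩ : ∃ a, 0 ≤ a ∧ X₁ = X₃ + b + a :=
    ⟨X₁ - (X₃ + b), by linarith, by ring⟩
  rw [ge_iff_le, ← sub_nonneg]
  ring_nf
  positivity
end

section
/- For any real numbers c₁, c₂, c₃, c₄ each satisfying 2 ≤ cₗ ≤ 9/4: 64 + 16∑ₗ(cₗ−1)(cₗ−2) ≥ (c₁+c₂+c₃+c₄)², and consequently (64 + 16∑ₗ(cₗ−1)(cₗ−2))² ≥ 256·c₁c₂c₃c₄. -/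
theorem cyclic_quad_estimate (c₁ c₂ c₃ c₄ : ℝ)
    (h₁ : 2 ≤ c₁ ∧ c₁ ≤ 9/4) (h₂ : 2 ≤ c₂ ∧ c₂ ≤ 9/4)
    (h₃ : 2 ≤ c₃ ∧ c₃ ≤ 9/4) (h₄ : 2 ≤ c₄ ∧ c₄ ≤ 9/4) :
    64 + 16*((c₁-1)*(c₁-2) + (c₂-1)*(c₂-2) + (c₃-1)*(c₃-2) + (c₄-1)*(c₄-2))
      ≥ (c₁+c₂+c₃+c₄)^2 ∧
    (64 + 16*((c₁-1)*(c₁-2) + (c₂-1)*(c₂-2) + (c₃-1)*(c₃-2) + (c₄-1)*(c₄-2)))^2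
      ≥ 256 * (c₁*c₂*c₃*c₄) := by
  obtain ⟨a1, b1⟩ := h₁
  obtain ⟨a2, b2⟩ := h₂
  obtain ⟨a3, b3⟩ := h₃
  obtain ⟨a4, b4⟩ := h₄
  have h5 : 64 + 16*((c₁-1)*(c₁-2) + (c₂-1)*(c₂-2) + (c₃-1)*(c₃-2) + (c₄-1)*(c₄-2))
      ≥ (c₁+c₂+c₃+c₄)^2 := by
    nlinarith [sq_nonneg (c₁-c₂), sq_nonneg (c₁-c₃), sq_nonneg (c₁-c₄),
      sq_nonneg (c₂-c₃), sq_nonneg (c₂-c₄), sq_nonneg (c₃-c₄),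
      sq_nonneg (c₁-2), sq_nonneg (c₂-2), sq_nonneg (c₃-2), sq_nonneg (c₄-2)]
  refine ⟨h5, ?_⟩
  set s := c₁+c₂+c₃+c₄ with hs
  have hA : (c₁+c₂)^2 ≥ 4*(c₁*c₂) := by nlinarith [sq_nonneg (c₁-c₂)]
  have hB : (c₃+c₄)^2 ≥ 4*(c₃*c₄) := by nlinarith [sq_nonneg (c₃-c₄)]
  have hC : s^2 ≥ 4*((c₁+c₂)*(c₃+c₄)) := by nlinarith [sq_nonneg (c₁+c₂-c₃-c₄)]
  have p12 : (0:ℝ) ≤ c₁*c₂ := by nlinarith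
  have p34 : (0:ℝ) ≤ c₃*c₄ := by nlinarith
  have hD : s^4 ≥ 256 * (c₁*c₂*c₃*c₄) := by
    have h1 : (s^2)^2 ≥ (4*((c₁+c₂)*(c₃+c₄)))^2 := by
      apply pow_le_pow_left₀ (by nlinarith) hC
    have h2 : (4*((c₁+c₂)*(c₃+c₄)))^2 = 16*((c₁+c₂)^2*(c₃+c₄)^2) := by ring
    have h3 : (c₁+c₂)^2*(c₃+c₄)^2 ≥ (4*(c₁*c₂))*(4*(c₃*c₄)) := by
      apply mul_le_mul hA hB (by linarith) (sq_nonneg _)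
    nlinarith
  have hpos : s^2 ≥ 0 := sq_nonneg s
  calc (64 + 16*((c₁-1)*(c₁-2) + (c₂-1)*(c₂-2) + (c₃-1)*(c₃-2) + (c₄-1)*(c₄-2)))^2
      ≥ (s^2)^2 := by apply pow_le_pow_left₀ hpos h5
    _ = s^4 := by ring
    _ ≥ 256 * (c₁*c₂*c₃*c₄) := hD
end
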